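/- Systematic encoding of a polar code via a peeling decoder always succeeds: if the variable nodes {v_{(n+1),i} : i ∈ A} (rightmost column, information indices) and {v_{1,i} : i ∈ F} (leftmost column, frozen indices) are initialized, where A and F partition [N], then the set of uninitialized variable nodes contains no stopping set of the factor graph G_N, so the peeling decoder determines all variable nodes. -/

import Mathlib

/-- Neighbors (variable nodes `(column, row)`, 1-indexed) of the check node `c_{k,i}`
in the polar factor graph `G_{2^n}` of `F₂^{⊗n}`.  In stage `k`, rows are grouped in
blocks of size `2^(n-k+1)`; a check in the top half of its block has degree 3
(with a slanted edge to row `i + 2^(n-k)`), one in the bottom half has degree 2. -/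
def chkNbrs (n k i : ℕ) : Finset (ℕ × ℕ) :=
  if (i - 1) % 2 ^ (n - k + 1) < 2 ^ (n - k) then
    {(k, i), (k + 1, i), (k + 1, i + 2 ^ (n - k))}
  else
    {(k, i), (k + 1, i)}

/-- `c_{k,i}` is a check node of `G_{2^n}`. -/
def IsCheck (n k i : ℕ) : Prop := 1 ≤ k ∧ k ≤ n ∧ 1 ≤ i ∧ i ≤ 2 ^ n

/-- `v_{k,i}` is a variable node of `G_{2^n}`. -/
def IsVN (n k i : ℕ) : Prop := 1 ≤ k ∧ k ≤ n + 1 ∧ 1 ≤ i ∧ i ≤ 2 ^ n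

/-- A stopping set of `G_{2^n}`: a set of variable nodes such that every check node
adjacent to the set has at least two neighbors in the set. -/
def IsStoppingSet (n : ℕ) (ψ : Finset (ℕ × ℕ)) : Prop :=
  (∀ v ∈ ψ, IsVN n v.1 v.2) ∧
  ∀ k i, IsCheck n k i → (∃ v ∈ chkNbrs n k i, v ∈ ψ) →
    2 ≤ ((chkNbrs n k i) ∩ ψ).card

/-- The leaf set of a stopping set: its variable nodes in the rightmost column. -/
def leafSet (n : ℕ) (ψ : Finset (ℕ × ℕ)) : Finset (ℕ × ℕ) :=
  ψ.filter fun v => v.1 = n + 1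

/-- A stopping tree rooted at `v_{1,i}`: a stopping set whose only variable node in
the leftmost column is `v_{1,i}`. -/
def IsStoppingTree (n i : ℕ) (ψ : Finset (ℕ × ℕ)) : Prop :=
  IsStoppingSet n ψ ∧ ψ.filter (fun v => v.1 = 1) = {(1, i)}

/-- `Tvec n i` is the `i`-th (1-indexed) entry of `T₂^{⊗n}` where `T₂ = (1,2)ᵀ`. -/
def Tvec : ℕ → ℕ → ℕ
  | 0, _ => 1
  | n + 1, i => if i ≤ 2 ^ n then Tvec n i else 2 * Tvec n (i - 2 ^ n)

/-- Neighbors of check node `c_{k,i}` in the graph `G_N` obtained by removing the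
bottom `2^⌈log N⌉ - N` rows of variable nodes of `G_{2^⌈log N⌉}`. -/
def chkNbrsN (N k i : ℕ) : Finset (ℕ × ℕ) :=
  (chkNbrs (Nat.clog 2 N) k i).filter fun v => v.2 ≤ N

/-- `c_{k,i}` is a check node of `G_N`. -/
def IsCheckN (N k i : ℕ) : Prop := 1 ≤ k ∧ k ≤ Nat.clog 2 N ∧ 1 ≤ i ∧ i ≤ N

/-- `v_{k,i}` is a variable node of `G_N`. -/
def IsVNN (N k i : ℕ) : Prop := 1 ≤ k ∧ k ≤ Nat.clog 2 N + 1 ∧ 1 ≤ i ∧ i ≤ N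

/-- A stopping set of `G_N`. -/
def IsStoppingSetN (N : ℕ) (ψ : Finset (ℕ × ℕ)) : Prop :=
  (∀ v ∈ ψ, IsVNN N v.1 v.2) ∧
  ∀ k i, IsCheckN N k i → (∃ v ∈ chkNbrsN N k i, v ∈ ψ) →
    2 ≤ ((chkNbrsN N k i) ∩ ψ).card

/-- The leaf set of a stopping set of `G_N`. -/
def leafSetN (N : ℕ) (ψ : Finset (ℕ × ℕ)) : Finset (ℕ × ℕ) :=
  ψ.filter fun v => v.1 = Nat.clog 2 N + 1

/-! Take the lowest row `i` of the factor graph that meets a stopping set `ψ`. Every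
check `c_{k,i}` is adjacent to `v_{k,i}`, `v_{k+1,i}` and at most one more variable node,
which lies in a row below `i` and hence outside `ψ`. The stopping condition at `c_{k,i}`
therefore forces `v_{k,i} ∈ ψ ↔ v_{k+1,i} ∈ ψ`, so row `i` lies entirely in `ψ`. Its
leftmost node is initialized when `i ∈ F` and its rightmost node when `i ∈ A`. -/

lemma left_mem_chkNbrs (n k i : ℕ) : (k, i) ∈ chkNbrs n k i := by
  unfold chkNbrs; split <;> simp

lemma right_mem_chkNbrs (n k i : ℕ) : (k + 1, i) ∈ chkNbrs n k i := by
  unfold chkNbrs; split <;> simp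

lemma eq_or_eq_or_lt_of_mem_chkNbrs {n k i : ℕ} {v : ℕ × ℕ} (hv : v ∈ chkNbrs n k i) :
    v = (k, i) ∨ v = (k + 1, i) ∨ i < v.2 := by
  unfold chkNbrs at hv
  split at hv <;> simp only [Finset.mem_insert, Finset.mem_singleton] at hv
  · rcases hv with rfl | rfl | rfl
    · exact .inl rfl
    · exact .inr (.inl rfl)
    · exact .inr (.inr (Nat.lt_add_of_pos_right (Nat.two_pow_pos _)))
  · tauto

lemma mem_and_mem_of_two_le_card_pair_inter {α : Type*} [DecidableEq α] {a b : α}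
    {s : Finset α} (h : 2 ≤ ({a, b} ∩ s).card) : a ∈ s ∧ b ∈ s := by
  by_contra hab
  have : ({a, b} ∩ s).card ≤ 1 := by
    rw [Finset.card_le_one]
    intro x hx y hy
    simp only [Finset.mem_inter, Finset.mem_insert, Finset.mem_singleton] at hx hy
    grind
  omega

lemma chkNbrsN_inter_eq_of_forall_snd_le {N k i : ℕ} {ψ : Finset (ℕ × ℕ)}
    (hlow : ∀ v ∈ ψ, v.2 ≤ i) (hiN : i ≤ N) :
    chkNbrsN N k i ∩ ψ = {(k, i), (k + 1, i)} ∩ ψ := by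
  ext v
  simp only [chkNbrsN, Finset.mem_inter, Finset.mem_filter, Finset.mem_insert,
    Finset.mem_singleton]
  constructor
  · rintro ⟨⟨hv, -⟩, hvψ⟩
    refine ⟨?_, hvψ⟩
    rcases eq_or_eq_or_lt_of_mem_chkNbrs hv with h | h | h
    · exact .inl h
    · exact .inr h
    · exact absurd (hlow v hvψ) (Nat.not_le.mpr h)
  · rintro ⟨rfl | rfl, hvψ⟩
    · exact ⟨⟨left_mem_chkNbrs _ _ _, hiN⟩, hvψ⟩
    · exact ⟨⟨right_mem_chkNbrs _ _ _, hiN⟩, hvψ⟩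

namespace IsStoppingSetN

variable {N : ℕ} {ψ : Finset (ℕ × ℕ)}

lemma mem_iff_succ_mem_of_forall_snd_le (hψ : IsStoppingSetN N ψ) {k i : ℕ}
    (hlow : ∀ v ∈ ψ, v.2 ≤ i) (hk : 1 ≤ k) (hkn : k ≤ Nat.clog 2 N) (hi : 1 ≤ i)
    (hiN : i ≤ N) : (k, i) ∈ ψ ↔ (k + 1, i) ∈ ψ := by
  have hinter := chkNbrsN_inter_eq_of_forall_snd_le (k := k) hlow hiN
  suffices (k, i) ∈ ψ ∨ (k + 1, i) ∈ ψ → (k, i) ∈ ψ ∧ (k + 1, i) ∈ ψ by tauto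
  intro hone
  have hmeet : ∃ v ∈ chkNbrsN N k i, v ∈ ψ := by
    rcases hone with h | h
    · exact ⟨_, Finset.mem_filter.mpr ⟨left_mem_chkNbrs _ _ _, hiN⟩, h⟩
    · exact ⟨_, Finset.mem_filter.mpr ⟨right_mem_chkNbrs _ _ _, hiN⟩, h⟩
  have hcard := hψ.2 k i ⟨hk, hkn, hi, hiN⟩ hmeet
  rw [hinter] at hcard
  exact mem_and_mem_of_two_le_card_pair_inter hcard

lemma exists_full_row (hψ : IsStoppingSetN N ψ) (hne : ψ.Nonempty) :
    ∃ i ∈ Finset.Icc 1 N, ∀ k ∈ Finset.Icc 1 (Nat.clog 2 N + 1), (k, i) ∈ ψ := by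
  obtain ⟨⟨k₀, i⟩, hv, hlow⟩ := ψ.exists_max_image Prod.snd hne
  obtain ⟨hk₀, hk₀n, hi, hiN⟩ := hψ.1 _ hv
  have hrow : ∀ k, 1 ≤ k → k ≤ Nat.clog 2 N + 1 → ((k, i) ∈ ψ ↔ (1, i) ∈ ψ) := by
    intro k hk hkn
    induction k, hk using Nat.le_induction with
    | base => rfl
    | succ k hk ih =>
      rw [← ih (by omega)]
      exact (hψ.mem_iff_succ_mem_of_forall_snd_le hlow hk (by omega) hi hiN).symm
  refine ⟨i, Finset.mem_Icc.mpr ⟨hi, hiN⟩, fun k hk => ?_⟩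
  obtain ⟨hk, hkn⟩ := Finset.mem_Icc.mp hk
  exact (hrow k hk hkn).mpr ((hrow k₀ hk₀ hk₀n).mp hv)

end IsStoppingSetN

theorem peeling_encoder_succeeds_general (N : ℕ) (A F : Finset ℕ)
    (hpart : ∀ i ∈ Finset.Icc 1 N, (i ∈ A ↔ i ∉ F))
    (ψ : Finset (ℕ × ℕ)) (hne : ψ.Nonempty) (hψ : IsStoppingSetN N ψ) :
    ∃ v ∈ ψ, (v.1 = Nat.clog 2 N + 1 ∧ v.2 ∈ A) ∨ (v.1 = 1 ∧ v.2 ∈ F) := by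
  obtain ⟨i, hi, hrow⟩ := hψ.exists_full_row hne
  by_cases hiF : i ∈ F
  · exact ⟨(1, i), hrow 1 (by simp), .inr ⟨rfl, hiF⟩⟩
  · exact ⟨(Nat.clog 2 N + 1, i), hrow _ (by simp), .inl ⟨rfl, (hpart i hi).mpr hiF⟩⟩

/-- Systematic peeling encoding always succeeds: if `A` and `F` partition `[N]` and
the variable nodes `{v_{⌈log N⌉+1, i} : i ∈ A}` (rightmost column) and
`{v_{1,i} : i ∈ F}` (leftmost column) are initialized, then no nonempty stopping set
of `G_N` consists entirely of uninitialized variable nodes, i.e., every nonempty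
stopping set contains an initialized node; hence the peeling decoder determines all
variable nodes. -/
theorem peeling_encoder_succeeds (N : ℕ) (hN : 1 ≤ N) (A F : Finset ℕ)
    (hA : A ⊆ Finset.Icc 1 N) (hF : F ⊆ Finset.Icc 1 N)
    (hpart : ∀ i ∈ Finset.Icc 1 N, (i ∈ A ↔ i ∉ F))
    (ψ : Finset (ℕ × ℕ)) (hne : ψ.Nonempty) (hψ : IsStoppingSetN N ψ) :
    ∃ v ∈ ψ, (v.1 = Nat.clog 2 N + 1 ∧ v.2 ∈ A) ∨ (v.1 = 1 ∧ v.2 ∈ F) :=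
  peeling_encoder_succeeds_general N A F hpart ψ hne hψ
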